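/- Let T be a triangulated category with coproducts, a compact generator H with Hom(H, T^i H) = 0 for i ≫ 0, and a t-structure (T^{≤0}, T^{≥0}) in the preferred equivalence class. Let G be a classical generator of T^c. Then the three metrics on S = T^c given by L_i = ⟨G⟩^{(−∞,−i]}, M_i = T^c ∩ T^{≤ −i}, and N_i = T^c ∩ [⟨G⟩^{[−i,∞)}]^⊥ satisfy: {L_i} is equivalent to {M_i}, and {M_i} is finer than {N_i} (i.e. for every i there exists j with M_j ⊆ N_i). -/

import Mathlib

namespace Stmt15

open CategoryTheory Category Limits Pretriangulated ZeroObject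

universe v u

variable {T : Type u} [Category.{v} T] [Preadditive T] [HasZeroObject T]
  [HasShift T ℤ] [∀ n : ℤ, (CategoryTheory.shiftFunctor T n).Additive] [Pretriangulated T]
  [HasCoproducts.{v} T]

/-- The canonical map `⨁ᵢ Hom(X, fᵢ) ⟶ Hom(X, ∐ f)`. -/
noncomputable def canMap {ι : Type v} [DecidableEq ι] (f : ι → T) (X : T) :
    (DirectSum ι fun i : ι => (X ⟶ f i)) →+ (X ⟶ ∐ f) :=
  DirectSum.toAddMonoid fun i =>
    AddMonoidHom.mk' (fun (h : X ⟶ f i) => h ≫ Sigma.ι f i)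
      (fun _ _ => Preadditive.add_comp _ _ _ _ _ _)

/-- An object `X` is compact if `Hom(X, −)` commutes with coproducts. -/
def IsCompactObject (X : T) : Prop :=
  ∀ {ι : Type v} [DecidableEq ι] (f : ι → T), Function.Bijective (canMap f X)

/-- `G` generates `T`: an object with no nonzero maps from any shift of `G` is zero. -/
def IsGenerator (G : T) : Prop :=
  ∀ X : T, (∀ n : ℤ, ∀ f : G⟦n⟧ ⟶ X, f = 0) → IsZero X

/-- A t-structure on `T`, given by the sequences of subcategories
`le n = T^{≤ n}` and `ge n = T^{≥ n}`. -/
structure TStruct (T : Type u) [Category.{v} T] [Preadditive T] [HasZeroObject T]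
    [HasShift T ℤ] [∀ n : ℤ, (CategoryTheory.shiftFunctor T n).Additive]
    [Pretriangulated T] where
  le : ℤ → Set T
  ge : ℤ → Set T
  le_iso : ∀ n, ∀ X Y : T, (X ≅ Y) → X ∈ le n → Y ∈ le n
  ge_iso : ∀ n, ∀ X Y : T, (X ≅ Y) → X ∈ ge n → Y ∈ ge n
  le_shift : ∀ (n : ℤ) (X : T), X ∈ le n ↔ X⟦(1 : ℤ)⟧ ∈ le (n - 1)
  ge_shift : ∀ (n : ℤ) (X : T), X ∈ ge n ↔ X⟦(1 : ℤ)⟧ ∈ ge (n - 1)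
  le_mono : ∀ n : ℤ, le n ⊆ le (n + 1)
  ge_anti : ∀ n : ℤ, ge (n + 1) ⊆ ge n
  hom_zero : ∀ X ∈ le 0, ∀ Y ∈ ge 1, ∀ f : X ⟶ Y, f = 0
  exists_triangle : ∀ X : T, ∃ (A B : T) (f : A ⟶ X) (g : X ⟶ B) (h : B ⟶ A⟦(1 : ℤ)⟧),
    A ∈ le 0 ∧ B ∈ ge 1 ∧ Triangle.mk f g h ∈ (distTriang T)

/-- A cocomplete pre-aisle: closed under isomorphisms, zero, suspension, extensions,
direct summands and small coproducts. -/
def IsCocompletePreAisle (P : Set T) : Prop :=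
  (∀ X Y : T, (X ≅ Y) → X ∈ P → Y ∈ P) ∧ ((0 : T) ∈ P) ∧
  (∀ X ∈ P, X⟦(1 : ℤ)⟧ ∈ P) ∧
  (∀ Tr ∈ (distTriang T), Tr.obj₁ ∈ P → Tr.obj₃ ∈ P → Tr.obj₂ ∈ P) ∧
  (∀ (X Y : T) (r : X ⟶ Y) (s : Y ⟶ X), s ≫ r = 𝟙 Y → X ∈ P → Y ∈ P) ∧
  (∀ {ι : Type v} (f : ι → T), (∀ i, f i ∈ P) → (∐ f) ∈ P)

/-- `overline{⟨G⟩}^{(−∞,−n]}`: the smallest cocomplete pre-aisle containing `G⟦m⟧` for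
all `m ≥ n`. -/
def aisleGen (G : T) (n : ℤ) : Set T :=
  ⋂₀ {P | IsCocompletePreAisle P ∧ ∀ m : ℤ, n ≤ m → G⟦m⟧ ∈ P}

/-- A t-structure is in the preferred equivalence class if it is equivalent to the
t-structure generated by a compact generator `G`, i.e. there is `A > 0` with
`⟨G⟩-aisle shifted by A ⊆ T^{≤0} ⊆ ⟨G⟩-aisle shifted by −A`. -/
def InPreferredClass (t : TStruct T) : Prop :=
  ∃ G : T, IsCompactObject G ∧ IsGenerator G ∧
    ∃ A : ℤ, 0 < A ∧ aisleGen G A ⊆ t.le 0 ∧ t.le 0 ⊆ aisleGen G (-A)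

/-- The subcategory `T^-_c`: objects admitting, for every `n`, a triangle
`E ⟶ X ⟶ D` with `E` compact and `D ∈ T^{≤ n}`. -/
def Tminus (t : TStruct T) : Set T :=
  {X | ∀ n : ℤ, ∃ (E D : T) (f : E ⟶ X) (g : X ⟶ D) (h : D ⟶ E⟦(1 : ℤ)⟧),
    IsCompactObject E ∧ D ∈ t.le n ∧ Triangle.mk f g h ∈ (distTriang T)}

/-- The subcategory `T^b_c = T^-_c ∩ T^b`. -/
def Tbc (t : TStruct T) : Set T :=
  Tminus t ∩ {X | ∃ m : ℤ, X ∈ t.ge m}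

/-- `T` is noetherian with witness `N` (relative to the t-structure `t`): every
`X ∈ T^-_c` admits a triangle `A ⟶ X ⟶ B` with `A ∈ T^-_c ∩ T^{≤0}` and
`B ∈ T^b_c ∩ T^{≥ −N}`. -/
def NoetherianWitness (t : TStruct T) (N : ℕ) : Prop :=
  ∀ X ∈ Tminus t, ∃ (A B : T) (f : A ⟶ X) (g : X ⟶ B) (h : B ⟶ A⟦(1 : ℤ)⟧),
    A ∈ Tminus t ∩ t.le 0 ∧ B ∈ Tbc t ∩ t.ge (-(N : ℤ)) ∧
    Triangle.mk f g h ∈ (distTriang T)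

/-- `T` is weakly approximable (relative to the t-structure `t`). -/
def WeaklyApproximable (t : TStruct T) : Prop :=
  ∃ (G : T) (A : ℕ), 0 < A ∧ IsCompactObject G ∧ IsGenerator G ∧
    G ∈ t.le (A : ℤ) ∧ (∀ X ∈ t.le (-(A : ℤ)), ∀ f : G ⟶ X, f = 0) ∧
    ∀ X ∈ t.le 0, ∃ (E D : T) (f : E ⟶ X) (g : X ⟶ D) (h : D ⟶ E⟦(1 : ℤ)⟧),
      E ∈ aisleGen G (-(A : ℤ)) ∧ D ∈ t.le (-1) ∧
      Triangle.mk f g h ∈ (distTriang T)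


/-- A class of objects closed under isomorphisms, zero, extensions and summands. -/
def IsExtSummandClosed (Q : Set T) : Prop :=
  (∀ X Y : T, (X ≅ Y) → X ∈ Q → Y ∈ Q) ∧ ((0 : T) ∈ Q) ∧
  (∀ Tr ∈ (distTriang T), Tr.obj₁ ∈ Q → Tr.obj₃ ∈ Q → Tr.obj₂ ∈ Q) ∧
  (∀ (X Y : T) (r : X ⟶ Y) (s : Y ⟶ X), s ≫ r = 𝟙 Y → X ∈ Q → Y ∈ Q)

/-- `⟨G⟩` with the set `P` of allowed shifts: the smallest iso-closed subcategory
containing `G⟦m⟧` for `m ∈ P` and closed under extensions and direct summands. -/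
def genSet (G : T) (P : Set ℤ) : Set T :=
  ⋂₀ {Q | IsExtSummandClosed Q ∧ ∀ m ∈ P, G⟦m⟧ ∈ Q}

/-- The metric `L_i = ⟨G⟩^{(−∞,−i]}` on `T^c`. -/
def Lmet (G : T) (i : ℕ) : Set T := genSet G {m : ℤ | (i : ℤ) ≤ m}

/-- The metric `M_i = T^c ∩ T^{≤ −i}`. -/
def Mmet (t : TStruct T) (i : ℕ) : Set T :=
  {X | IsCompactObject X ∧ X ∈ t.le (-(i : ℤ))}

/-- The metric `N_i = T^c ∩ [⟨G⟩^{[−i,∞)}]^⊥`. -/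
def Nmet (G : T) (i : ℕ) : Set T :=
  {X | IsCompactObject X ∧ ∀ P ∈ genSet G {m : ℤ | m ≤ (i : ℤ)}, ∀ f : P ⟶ X, f = 0}


/-!
Everything rests on two facts about a compact generator `W`. Every object lies in the
cocomplete pre-aisle generated by all shifts of `W`: a cellular tower over `X` has a homotopy
colimit mapping isomorphically to `X`, since `W` detects the cone. And the objects all of whose
maps from compact objects factor through `genSet W {m | s ≤ m}` form a cocomplete pre-aisle, so a
compact object of `aisleGen W s` is a retract of, hence lies in, `genSet W {m | s ≤ m}`.

Consequently `G`, `H` and the generator `G₀` of the preferred class build one another from a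
bounded range of shifts. Comparing `aisleGen G₀` with `T^{≤ 0}` then gives `L ⪯ M` and `M ⪯ L`,
and the vanishing of `Hom(H, H⟦i⟧)` for `i ≫ 0` passes to `G`, which makes
`genSet G {m | m ≤ i}` left orthogonal to `genSet G {m | j ≤ m}` for `j ≫ i`, i.e. `M ⪯ N`.
-/

set_option linter.unusedSectionVars false

namespace IsExtSummandClosed

variable {Q : Set T}

lemma of_iso (hQ : IsExtSummandClosed Q) {X Y : T} (e : X ≅ Y) (hX : X ∈ Q) : Y ∈ Q :=
  hQ.1 X Y e hX

lemma zero_mem (hQ : IsExtSummandClosed Q) : (0 : T) ∈ Q := hQ.2.1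

lemma ext_mem (hQ : IsExtSummandClosed Q) {Tr : Triangle T} (hTr : Tr ∈ distTriang T)
    (h₁ : Tr.obj₁ ∈ Q) (h₃ : Tr.obj₃ ∈ Q) : Tr.obj₂ ∈ Q :=
  hQ.2.2.1 Tr hTr h₁ h₃

lemma of_retract (hQ : IsExtSummandClosed Q) {X Y : T} (r : X ⟶ Y) (s : Y ⟶ X)
    (hsr : s ≫ r = 𝟙 Y) (hX : X ∈ Q) : Y ∈ Q :=
  hQ.2.2.2 X Y r s hsr hX

lemma mem_of_isZero (hQ : IsExtSummandClosed Q) {Z : T} (hZ : IsZero Z) : Z ∈ Q :=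
  hQ.of_iso ((isZero_zero T).iso hZ) hQ.zero_mem

lemma biprod_mem (hQ : IsExtSummandClosed Q) {X Y : T} (hX : X ∈ Q) (hY : Y ∈ Q) :
    (X ⊞ Y) ∈ Q :=
  hQ.ext_mem (binaryBiproductTriangle_distinguished X Y) hX hY

lemma preimage_shift (hQ : IsExtSummandClosed Q) (n : ℤ) :
    IsExtSummandClosed {X : T | X⟦n⟧ ∈ Q} := by
  refine ⟨fun _ _ e hX => hQ.of_iso ((shiftFunctor T n).mapIso e) hX,
    hQ.mem_of_isZero ((shiftFunctor T n).map_isZero (isZero_zero T)),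
    fun Tr hTr h₁ h₃ => hQ.ext_mem (Triangle.shift_distinguished Tr hTr n) h₁ h₃,
    fun _ _ r s hsr hX => hQ.of_retract (r⟦n⟧') (s⟦n⟧') ?_ hX⟩
  rw [← Functor.map_comp, hsr, CategoryTheory.Functor.map_id]

end IsExtSummandClosed

namespace IsCocompletePreAisle

variable {Q : Set T}

lemma toIsExtSummandClosed (hQ : IsCocompletePreAisle Q) : IsExtSummandClosed Q :=
  ⟨hQ.1, hQ.2.1, hQ.2.2.2.1, hQ.2.2.2.2.1⟩

lemma shift_one_mem (hQ : IsCocompletePreAisle Q) {X : T} (hX : X ∈ Q) : X⟦(1 : ℤ)⟧ ∈ Q :=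
  hQ.2.2.1 X hX

lemma sigma_mem (hQ : IsCocompletePreAisle Q) {ι : Type v} {f : ι → T} (hf : ∀ i, f i ∈ Q) :
    (∐ f) ∈ Q :=
  hQ.2.2.2.2.2 f hf

lemma preimage_shift (hQ : IsCocompletePreAisle Q) (n : ℤ) :
    IsCocompletePreAisle {X : T | X⟦n⟧ ∈ Q} := by
  have hQ' := hQ.toIsExtSummandClosed.preimage_shift n
  refine ⟨hQ'.1, hQ'.2.1, fun X hX => ?_, hQ'.2.2.1, hQ'.2.2.2, fun f hf => ?_⟩
  · exact hQ.toIsExtSummandClosed.of_iso ((shiftFunctorComm T n 1).app X)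
      (hQ.shift_one_mem hX)
  · exact hQ.toIsExtSummandClosed.of_iso
      (asIso (sigmaComparison (shiftFunctor T n) f)) (hQ.sigma_mem hf)

end IsCocompletePreAisle

section GeneratedClasses

variable {W : T}

lemma genSet_subset {P : Set ℤ} {Q : Set T} (hQ : IsExtSummandClosed Q)
    (hW : ∀ m ∈ P, W⟦m⟧ ∈ Q) : genSet W P ⊆ Q :=
  fun _ hX => hX Q ⟨hQ, hW⟩

lemma shift_mem_genSet {P : Set ℤ} {m : ℤ} (hm : m ∈ P) : W⟦m⟧ ∈ genSet W P :=
  fun _ hQ => hQ.2 m hm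

lemma isExtSummandClosed_genSet (W : T) (P : Set ℤ) : IsExtSummandClosed (genSet W P) :=
  ⟨fun _ _ e hX Q hQ => hQ.1.of_iso e (hX Q hQ), fun _ hQ => hQ.1.zero_mem,
    fun _ hTr h₁ h₃ Q hQ => hQ.1.ext_mem hTr (h₁ Q hQ) (h₃ Q hQ),
    fun _ _ r s hsr hX Q hQ => hQ.1.of_retract r s hsr (hX Q hQ)⟩

lemma genSet_mono {P P' : Set ℤ} (h : P ⊆ P') : genSet W P ⊆ genSet W P' :=
  genSet_subset (isExtSummandClosed_genSet W P') fun _ hm => shift_mem_genSet (h hm)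

lemma shift_mem_genSet_image {P : Set ℤ} {X : T} (hX : X ∈ genSet W P) (n : ℤ) :
    X⟦n⟧ ∈ genSet W ((· + n) '' P) := by
  refine genSet_subset ((isExtSummandClosed_genSet W _).preimage_shift n) (fun m hm => ?_) hX
  exact (isExtSummandClosed_genSet W _).of_iso ((shiftFunctorAdd' T m n (m + n) rfl).app W)
    (shift_mem_genSet ⟨m, hm, rfl⟩)

lemma exists_mem_genSet_inter_Icc {P : Set ℤ} {X : T} (hX : X ∈ genSet W P) :
    ∃ c d : ℤ, X ∈ genSet W (P ∩ Set.Icc c d) := by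
  refine genSet_subset (Q := {X | ∃ c d : ℤ, X ∈ genSet W (P ∩ Set.Icc c d)})
    ⟨?_, ⟨0, 0, (isExtSummandClosed_genSet W _).zero_mem⟩, ?_, ?_⟩ ?_ hX
  · rintro X Y e ⟨c, d, hX⟩
    exact ⟨c, d, (isExtSummandClosed_genSet W _).of_iso e hX⟩
  · rintro Tr hTr ⟨c₁, d₁, h₁⟩ ⟨c₃, d₃, h₃⟩
    have hmono : ∀ c d, c₁ ⊓ c₃ ≤ c → d ≤ d₁ ⊔ d₃ →
        genSet W (P ∩ Set.Icc c d) ⊆ genSet W (P ∩ Set.Icc (c₁ ⊓ c₃) (d₁ ⊔ d₃)) :=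
      fun c d hc hd => genSet_mono (Set.inter_subset_inter_right _ (Set.Icc_subset_Icc hc hd))
    exact ⟨_, _, (isExtSummandClosed_genSet W _).ext_mem hTr
      (hmono _ _ inf_le_left le_sup_left h₁) (hmono _ _ inf_le_right le_sup_right h₃)⟩
  · rintro X Y r s hsr ⟨c, d, hX⟩
    exact ⟨c, d, (isExtSummandClosed_genSet W _).of_retract r s hsr hX⟩
  · intro m hm
    exact ⟨m, m, shift_mem_genSet ⟨hm, le_rfl, le_rfl⟩⟩

lemma aisleGen_subset {n : ℤ} {Q : Set T} (hQ : IsCocompletePreAisle Q)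
    (hW : ∀ m, n ≤ m → W⟦m⟧ ∈ Q) : aisleGen W n ⊆ Q :=
  fun _ hX => hX Q ⟨hQ, hW⟩

lemma shift_mem_aisleGen {n m : ℤ} (hm : n ≤ m) : W⟦m⟧ ∈ aisleGen W n :=
  fun _ hQ => hQ.2 m hm

lemma isCocompletePreAisle_aisleGen (W : T) (n : ℤ) : IsCocompletePreAisle (aisleGen W n) :=
  ⟨fun _ _ e hX Q hQ => hQ.1.toIsExtSummandClosed.of_iso e (hX Q hQ),
    fun _ hQ => hQ.1.toIsExtSummandClosed.zero_mem,
    fun _ hX Q hQ => hQ.1.shift_one_mem (hX Q hQ),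
    fun _ hTr h₁ h₃ Q hQ => hQ.1.toIsExtSummandClosed.ext_mem hTr (h₁ Q hQ) (h₃ Q hQ),
    fun _ _ r s hsr hX Q hQ => hQ.1.toIsExtSummandClosed.of_retract r s hsr (hX Q hQ),
    fun _ hf Q hQ => hQ.1.sigma_mem fun i => hf i Q hQ⟩

lemma aisleGen_anti {n n' : ℤ} (h : n ≤ n') : aisleGen W n' ⊆ aisleGen W n :=
  aisleGen_subset (isCocompletePreAisle_aisleGen W n) fun _ hm => shift_mem_aisleGen (h.trans hm)

lemma genSet_subset_aisleGen {P : Set ℤ} {n : ℤ} (h : ∀ m ∈ P, n ≤ m) :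
    genSet W P ⊆ aisleGen W n :=
  genSet_subset (isCocompletePreAisle_aisleGen W n).toIsExtSummandClosed
    fun m hm => shift_mem_aisleGen (h m hm)

lemma shift_mem_aisleGen_add {s : ℤ} {X : T} (hX : X ∈ aisleGen W s) (n : ℤ) :
    X⟦n⟧ ∈ aisleGen W (s + n) := by
  refine aisleGen_subset ((isCocompletePreAisle_aisleGen W _).preimage_shift n)
    (fun m hm => ?_) hX
  exact (isCocompletePreAisle_aisleGen W _).toIsExtSummandClosed.of_iso
    ((shiftFunctorAdd' T m n (m + n) rfl).app W) (shift_mem_aisleGen (by omega))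

lemma aisleGen_subset_aisleGen_of_mem_genSet {W' : T} {c : ℤ}
    (hW' : W' ∈ genSet W {p | c ≤ p}) (r : ℤ) : aisleGen W' r ⊆ aisleGen W (c + r) :=
  aisleGen_subset (isCocompletePreAisle_aisleGen W (c + r)) fun m hm =>
    aisleGen_anti (by omega)
      (shift_mem_aisleGen_add (genSet_subset_aisleGen (fun _ hp => hp) hW') m)

end GeneratedClasses

namespace TStruct

variable (t : TStruct T)

lemma mem_le_iff_of_iso {X Y : T} (e : X ≅ Y) (n : ℤ) : X ∈ t.le n ↔ Y ∈ t.le n :=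
  ⟨t.le_iso n X Y e, t.le_iso n Y X e.symm⟩

lemma shift_mem_le_iff (k n : ℤ) (X : T) : X⟦k⟧ ∈ t.le (n - k) ↔ X ∈ t.le n := by
  induction k using Int.induction_on generalizing n with
  | zero => rw [sub_zero]; exact t.mem_le_iff_of_iso ((shiftFunctorZero T ℤ).app X) n
  | succ k ih =>
    rw [← t.mem_le_iff_of_iso ((shiftFunctorAdd' T (k : ℤ) 1 (k + 1) rfl).app X).symm,
      Functor.comp_obj, show n - ((k : ℤ) + 1) = n - k - 1 by ring, ← t.le_shift, ih]
  | pred k ih =>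
    rw [t.le_shift, show n - (-(k : ℤ) - 1) - 1 = n - -(k : ℤ) by ring,
      ← Functor.comp_obj,
      t.mem_le_iff_of_iso ((shiftFunctorAdd' T (-(k : ℤ) - 1) 1 (-k) (by ring)).app X).symm, ih]

lemma le_subset_aisleGen {W : T} {s : ℤ} (h : t.le 0 ⊆ aisleGen W s) (n : ℤ) :
    t.le n ⊆ aisleGen W (s - n) := fun X hX => by
  have hXn : X⟦n⟧ ∈ t.le 0 := by rwa [← sub_self n, t.shift_mem_le_iff]
  exact (isCocompletePreAisle_aisleGen W _).toIsExtSummandClosed.of_iso (shiftShiftNeg X n)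
    (shift_mem_aisleGen_add (h hXn) (-n))

lemma aisleGen_subset_le {W : T} {s : ℤ} (h : aisleGen W s ⊆ t.le 0) (n : ℤ) :
    aisleGen W (s - n) ⊆ t.le n := fun X hX => by
  have hXn := h (by simpa using shift_mem_aisleGen_add hX n)
  rwa [← sub_self n, t.shift_mem_le_iff] at hXn

end TStruct

section CompactObjects

variable {ι : Type v} [DecidableEq ι] (f : ι → T)

noncomputable def sigmaRestrict (S : Finset ι) : ∐ f ⟶ ∐ f :=
  ∑ j ∈ S, Sigma.π f j ≫ Sigma.ι f j

lemma ι_sigmaRestrict (S : Finset ι) (i : ι) :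
    Sigma.ι f i ≫ sigmaRestrict f S = if i ∈ S then Sigma.ι f i else 0 := by
  rw [sigmaRestrict, Preadditive.comp_sum]
  split_ifs with hi
  · rw [Finset.sum_eq_single_of_mem i hi fun j _ hji => by
      rw [Sigma.ι_π_of_ne_assoc f hji.symm, zero_comp], Sigma.ι_π_eq_id_assoc]
  · exact Finset.sum_eq_zero fun j hj => by
      rw [Sigma.ι_π_of_ne_assoc f (ne_of_mem_of_not_mem hj hi).symm, zero_comp]

lemma sub_sigmaRestrict_comp_sub_sigmaRestrict (S S' : Finset ι) :
    (𝟙 (∐ f) - sigmaRestrict f S) ≫ (𝟙 (∐ f) - sigmaRestrict f S') =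
      𝟙 (∐ f) - sigmaRestrict f (S ∪ S') := by
  ext i
  simp only [Preadditive.comp_sub, Preadditive.sub_comp, comp_id, id_comp, ← assoc,
    ι_sigmaRestrict, Finset.mem_union]
  split_ifs <;> simp_all [ι_sigmaRestrict]

lemma canMap_of (X : T) (i : ι) (y : X ⟶ f i) :
    canMap f X (DirectSum.of _ i y) = y ≫ Sigma.ι f i :=
  DirectSum.toAddMonoid_of _ _ _

lemma canMap_comp_π (X : T) (x : DirectSum ι fun i => (X ⟶ f i)) (j : ι) :
    canMap f X x ≫ Sigma.π f j = x j := by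
  induction x using DirectSum.induction_on with
  | zero => simp
  | of i y =>
    rw [canMap_of, assoc, Sigma.ι_π]
    by_cases h : i = j
    · subst h; simp
    · rw [dif_neg h, comp_zero, DirectSum.of_eq_of_ne _ _ _ (Ne.symm h)]
  | add x y hx hy => rw [map_add, Preadditive.add_comp, hx, hy, DirectSum.add_apply]

lemma canMap_injective (X : T) : Function.Injective (canMap f X) := fun x y h =>
  DFinsupp.ext fun j => by rw [← canMap_comp_π f X x j, ← canMap_comp_π f X y j, h]

end CompactObjects

lemma isCompactObject_iff {X : T} : IsCompactObject X ↔
    ∀ {ι : Type v} [DecidableEq ι] (f : ι → T) (h : X ⟶ ∐ f),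
      ∃ S : Finset ι, h ≫ sigmaRestrict f S = h := by
  classical
  constructor
  · intro hX ι _ f h
    obtain ⟨x, rfl⟩ := (hX f).2 h
    have hx : canMap f X x = ∑ i ∈ x.support, x i ≫ Sigma.ι f i := by
      conv_lhs => rw [← DirectSum.sum_support_of x]
      simp only [map_sum, canMap_of]
    refine ⟨x.support, ?_⟩
    rw [hx, Preadditive.sum_comp]
    refine Finset.sum_congr rfl fun i hi => ?_
    rw [assoc, ι_sigmaRestrict, if_pos hi]
  · intro hX ι _ f
    refine ⟨canMap_injective f X, fun h => ?_⟩
    obtain ⟨S, hS⟩ := hX f h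
    refine ⟨∑ j ∈ S, DirectSum.of _ j (h ≫ Sigma.π f j), ?_⟩
    simp only [map_sum, canMap_of, assoc]
    rw [← Preadditive.comp_sum]
    exact hS

lemma isCompactObject_of_retract {X Y : T} (r : X ⟶ Y) (s : Y ⟶ X) (hsr : s ≫ r = 𝟙 Y)
    (hX : IsCompactObject X) : IsCompactObject Y := by
  rw [isCompactObject_iff] at hX ⊢
  intro ι _ f h
  obtain ⟨S, hS⟩ := hX f (r ≫ h)
  exact ⟨S, by simpa [reassoc_of% hsr] using s ≫= hS⟩

lemma isCompactObject_of_iso {X Y : T} (e : X ≅ Y) (hX : IsCompactObject X) :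
    IsCompactObject Y :=
  isCompactObject_of_retract e.hom e.inv e.inv_hom_id hX

lemma isCompactObject_zero : IsCompactObject (0 : T) :=
  isCompactObject_iff.2 fun _ _ => ⟨∅, (isZero_zero T).eq_of_src _ _⟩

lemma isCompactObject_ext {Tr : Triangle T} (hTr : Tr ∈ distTriang T)
    (h₁ : IsCompactObject Tr.obj₁) (h₃ : IsCompactObject Tr.obj₃) :
    IsCompactObject Tr.obj₂ := by
  rw [isCompactObject_iff] at h₁ h₃ ⊢
  intro ι _ f h
  obtain ⟨S₁, hS₁⟩ := h₁ f (Tr.mor₁ ≫ h)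
  obtain ⟨g, hg⟩ := Triangle.yoneda_exact₂ _ hTr (h ≫ (𝟙 _ - sigmaRestrict f S₁))
    (by rw [← assoc, Preadditive.comp_sub, comp_id, hS₁, sub_self])
  obtain ⟨S₃, hS₃⟩ := h₃ f g
  refine ⟨S₁ ∪ S₃, Eq.symm (sub_eq_zero.1 ?_)⟩
  rw [← comp_id h, assoc, ← Preadditive.comp_sub, id_comp,
    ← sub_sigmaRestrict_comp_sub_sigmaRestrict, ← assoc, hg, assoc, Preadditive.comp_sub g,
    comp_id, hS₃, sub_self, comp_zero]

lemma sigmaComparison_comp_map_sigmaRestrict (F : T ⥤ T) [F.Additive] {ι : Type v}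
    [DecidableEq ι] (f : ι → T) (S : Finset ι) :
    sigmaComparison F f ≫ F.map (sigmaRestrict f S) =
      sigmaRestrict (fun i => F.obj (f i)) S ≫ sigmaComparison F f := by
  ext i
  rw [ι_comp_sigmaComparison_assoc, ← F.map_comp, ι_sigmaRestrict, ← assoc,
    ι_sigmaRestrict]
  split_ifs <;> simp

lemma isCompactObject_of_isCompactObject_obj (F : T ⥤ T) [F.Faithful] [F.Additive]
    [PreservesColimitsOfSize.{v, v} F] {Y : T} (hY : IsCompactObject (F.obj Y)) :
    IsCompactObject Y := by
  rw [isCompactObject_iff] at hY ⊢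
  intro ι _ f h
  obtain ⟨S, hS⟩ := hY _ (F.map h ≫ inv (sigmaComparison F f))
  refine ⟨S, F.map_injective ?_⟩
  calc F.map (h ≫ sigmaRestrict f S)
      = (F.map h ≫ inv (sigmaComparison F f)) ≫ sigmaComparison F f ≫
          F.map (sigmaRestrict f S) := by simp
    _ = F.map h := by rw [sigmaComparison_comp_map_sigmaRestrict, ← assoc, hS]; simp

lemma isCompactObject_shift {X : T} (hX : IsCompactObject X) (n : ℤ) :
    IsCompactObject (X⟦n⟧) :=
  isCompactObject_of_isCompactObject_obj (shiftFunctor T (-n))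
    (isCompactObject_of_iso (shiftShiftNeg X n).symm hX)

lemma isExtSummandClosed_isCompactObject :
    IsExtSummandClosed {X : T | IsCompactObject X} :=
  ⟨fun _ _ e hX => isCompactObject_of_iso e hX, isCompactObject_zero,
    fun _ hTr h₁ h₃ => isCompactObject_ext hTr h₁ h₃,
    fun _ _ r s hsr hX => isCompactObject_of_retract r s hsr hX⟩

lemma genSet_subset_isCompactObject {W : T} (hW : IsCompactObject W) (P : Set ℤ) :
    genSet W P ⊆ {X | IsCompactObject X} :=
  genSet_subset isExtSummandClosed_isCompactObject fun m _ => isCompactObject_shift hW m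

section Orthogonality

lemma hom_eq_zero_of_shift {X Y : T} {n : ℤ} (h : ∀ f : X ⟶ Y⟦n⟧, f = 0)
    (a b : ℤ) (hab : b - a = n) (f : X⟦a⟧ ⟶ Y⟦b⟧) : f = 0 := by
  let e : Y⟦b⟧ ≅ Y⟦n⟧⟦a⟧ := (shiftFunctorAdd' T n a b (by omega)).app Y
  obtain ⟨g, hg⟩ := (shiftFunctor T a).map_surjective (f ≫ e.hom)
  rw [← cancel_mono e.hom, ← hg, h g, Functor.map_zero, zero_comp]

lemma isExtSummandClosed_homFrom_eq_zero (X : T) :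
    IsExtSummandClosed {Y : T | ∀ f : X ⟶ Y, f = 0} := by
  refine ⟨fun Y Y' e hY f => ?_, fun f => (isZero_zero T).eq_of_tgt f 0,
    fun Tr hTr h₁ h₃ f => ?_, fun Y Y' r s hsr hY f => ?_⟩
  · rw [← cancel_mono e.inv, hY (f ≫ e.inv), zero_comp]
  · obtain ⟨g, rfl⟩ := Triangle.coyoneda_exact₂ _ hTr f (h₃ _)
    rw [h₁ g, zero_comp]
  · rw [← comp_id f, ← hsr, ← assoc, hY (f ≫ s), zero_comp]

lemma isExtSummandClosed_homTo_eq_zero (Y : T) :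
    IsExtSummandClosed {X : T | ∀ f : X ⟶ Y, f = 0} := by
  refine ⟨fun X X' e hX f => ?_, fun f => (isZero_zero T).eq_of_src f 0,
    fun Tr hTr h₁ h₃ f => ?_, fun X X' r s hsr hX f => ?_⟩
  · rw [← cancel_epi e.hom, hX (e.hom ≫ f), comp_zero]
  · obtain ⟨g, rfl⟩ := Triangle.yoneda_exact₂ _ hTr f (h₁ _)
    rw [h₃ g, comp_zero]
  · rw [← id_comp f, ← hsr, assoc, hX (r ≫ f), comp_zero]

lemma genSet_hom_eq_zero {W : T} {P₁ P₂ : Set ℤ}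
    (hW : ∀ a ∈ P₁, ∀ b ∈ P₂, ∀ f : W⟦a⟧ ⟶ W⟦b⟧, f = 0) :
    ∀ X ∈ genSet W P₁, ∀ Y ∈ genSet W P₂, ∀ f : X ⟶ Y, f = 0 := fun _ hX Y hY =>
  genSet_subset (isExtSummandClosed_homTo_eq_zero Y)
    (fun a ha => genSet_subset (isExtSummandClosed_homFrom_eq_zero _) (hW a ha) hY) hX

lemma hom_shift_eq_zero_of_mem_genSet_Icc {H G : T} {n c d : ℤ}
    (hH : ∀ i, n ≤ i → ∀ f : H ⟶ H⟦i⟧, f = 0) (hG : G ∈ genSet H (Set.Icc c d)) :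
    ∀ q, n + (d - c) ≤ q → ∀ f : G ⟶ G⟦q⟧, f = 0 := by
  intro q hq
  refine genSet_hom_eq_zero ?_ G hG _ (shift_mem_genSet_image hG q)
  rintro a ⟨-, had⟩ _ ⟨s, ⟨hcs, -⟩, rfl⟩
  exact hom_eq_zero_of_shift (hH (s + q - a) (by omega)) a (s + q) (by omega)

lemma genSet_Iic_hom_genSet_Ici_eq_zero {G : T} {q₀ : ℤ}
    (hG : ∀ q, q₀ ≤ q → ∀ f : G ⟶ G⟦q⟧, f = 0) {a b : ℤ} (hab : a + q₀ ≤ b) :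
    ∀ X ∈ genSet G {m | m ≤ a}, ∀ Y ∈ genSet G {m | b ≤ m}, ∀ f : X ⟶ Y, f = 0 :=
  genSet_hom_eq_zero fun a' ha' b' hb' =>
    hom_eq_zero_of_shift (hG (b' - a') (by change a' ≤ a at ha'; change b ≤ b' at hb'; omega))
      a' b' rfl

end Orthogonality

section CompactApproximation

variable {Q : Set T}

def FactorsThroughClass (Q : Set T) {K E : T} (h : K ⟶ E) : Prop :=
  ∃ F ∈ Q, ∃ (a : K ⟶ F) (b : F ⟶ E), h = a ≫ b

def compactlyFactoring (Q : Set T) : Set T :=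
  {E | ∀ K : T, IsCompactObject K → ∀ h : K ⟶ E, FactorsThroughClass Q h}

lemma FactorsThroughClass.zero (hQ : IsExtSummandClosed Q) (K E : T) :
    FactorsThroughClass Q (0 : K ⟶ E) :=
  ⟨0, hQ.zero_mem, 0, 0, by rw [zero_comp]⟩

lemma FactorsThroughClass.add (hQ : IsExtSummandClosed Q) {K E : T} {h₁ h₂ : K ⟶ E}
    (f₁ : FactorsThroughClass Q h₁) (f₂ : FactorsThroughClass Q h₂) :
    FactorsThroughClass Q (h₁ + h₂) := by
  obtain ⟨F₁, hF₁, a₁, b₁, rfl⟩ := f₁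
  obtain ⟨F₂, hF₂, a₂, b₂, rfl⟩ := f₂
  exact ⟨F₁ ⊞ F₂, hQ.biprod_mem hF₁ hF₂, biprod.lift a₁ a₂, biprod.desc b₁ b₂,
    biprod.lift_desc.symm⟩

lemma FactorsThroughClass.comp {K E E' : T} {h : K ⟶ E} (hf : FactorsThroughClass Q h)
    (g : E ⟶ E') : FactorsThroughClass Q (h ≫ g) := by
  obtain ⟨F, hF, a, b, rfl⟩ := hf
  exact ⟨F, hF, a, b ≫ g, assoc _ _ _⟩

lemma mem_compactlyFactoring {E : T} (hE : E ∈ Q) : E ∈ compactlyFactoring Q :=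
  fun _ _ h => ⟨E, hE, h, 𝟙 E, (comp_id h).symm⟩

lemma mem_of_mem_compactlyFactoring (hQ : IsExtSummandClosed Q) {E : T}
    (hE : E ∈ compactlyFactoring Q) (hEc : IsCompactObject E) : E ∈ Q := by
  obtain ⟨F, hF, a, b, hab⟩ := hE E hEc (𝟙 E)
  exact hQ.of_retract b a hab.symm hF

lemma compactlyFactoring_of_retract {X Y : T} (r : X ⟶ Y) (s : Y ⟶ X) (hsr : s ≫ r = 𝟙 Y)
    (hX : X ∈ compactlyFactoring Q) : Y ∈ compactlyFactoring Q := fun K hK f => by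
  simpa [hsr] using (hX K hK (f ≫ s)).comp r

lemma sigma_mem_compactlyFactoring (hQ : IsExtSummandClosed Q) {ι : Type v} {E : ι → T}
    (hE : ∀ i, E i ∈ compactlyFactoring Q) : (∐ E) ∈ compactlyFactoring Q := by
  classical
  intro K hK f
  obtain ⟨S, hS⟩ := isCompactObject_iff.1 hK E f
  rw [← hS, sigmaRestrict, Preadditive.comp_sum]
  exact Finset.sum_induction _ _ (fun _ _ => FactorsThroughClass.add hQ)
    (FactorsThroughClass.zero hQ _ _) fun j _ => by
      rw [← assoc]; exact (hE j K hK _).comp _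

lemma exists_factor_shift_of_mem_compactlyFactoring {E : T} (hE : E ∈ compactlyFactoring Q)
    {K : T} (hK : IsCompactObject K) (h : K ⟶ E⟦(1 : ℤ)⟧) :
    ∃ F ∈ Q, ∃ (a : K ⟶ F⟦(1 : ℤ)⟧) (m : F ⟶ E), h = a ≫ m⟦(1 : ℤ)⟧' := by
  obtain ⟨F, hF, a, m, ham⟩ := hE _ (isCompactObject_shift hK (-1))
    ((shiftFunctor T (1 : ℤ)).preimage ((shiftNegShift K 1).hom ≫ h))
  refine ⟨F, hF, (shiftNegShift K 1).inv ≫ a⟦(1 : ℤ)⟧', m, ?_⟩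
  rw [assoc, ← Functor.map_comp, ← ham, Functor.map_preimage, Iso.inv_hom_id_assoc]

lemma shift_mem_compactlyFactoring (hQ : ∀ X ∈ Q, X⟦(1 : ℤ)⟧ ∈ Q) {E : T}
    (hE : E ∈ compactlyFactoring Q) : E⟦(1 : ℤ)⟧ ∈ compactlyFactoring Q := fun K hK h => by
  obtain ⟨F, hF, a, m, rfl⟩ := exists_factor_shift_of_mem_compactlyFactoring hE hK h
  exact ⟨F⟦(1 : ℤ)⟧, hQ F hF, a, m⟦(1 : ℤ)⟧', rfl⟩

/-- Approximate `f ≫ mor₂` by `K ⟶ F₃ ⟶ obj₃`. The obstruction `F₃ ⟶ obj₁⟦1⟧` vanishes on `K`,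
so it factors through the compact cone of `K ⟶ F₃`, hence through some `F₁⟦1⟧` with `F₁ ∈ Q`;
the extension of `F₃` by `F₁` then approximates `f` up to a map through `obj₁`. -/
lemma ext_mem_compactlyFactoring (hQ : IsExtSummandClosed Q)
    (hQc : Q ⊆ {X | IsCompactObject X}) {Tr : Triangle T} (hTr : Tr ∈ distTriang T)
    (h₁ : Tr.obj₁ ∈ compactlyFactoring Q) (h₃ : Tr.obj₃ ∈ compactlyFactoring Q) :
    Tr.obj₂ ∈ compactlyFactoring Q := by
  intro K hK f
  obtain ⟨F₃, hF₃, a, b, hab⟩ := h₃ K hK (f ≫ Tr.mor₂)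
  obtain ⟨C, c, δ, hC⟩ := distinguished_cocone_triangle a
  have hac : a ≫ c = 0 := comp_distTriang_mor_zero₁₂ _ hC
  have habδ : a ≫ b ≫ Tr.mor₃ = 0 := by
    rw [← assoc, ← hab, assoc, comp_distTriang_mor_zero₂₃ _ hTr, comp_zero]
  obtain ⟨e, he⟩ : ∃ e : C ⟶ Tr.obj₁⟦(1 : ℤ)⟧, b ≫ Tr.mor₃ = c ≫ e :=
    Triangle.yoneda_exact₂ _ hC _ habδ
  have hCc : IsCompactObject C :=
    isCompactObject_ext (rot_of_distTriang _ hC) (hQc hF₃) (isCompactObject_shift hK 1)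
  obtain ⟨F₁, hF₁, e₁, m, rfl⟩ := exists_factor_shift_of_mem_compactlyFactoring h₁ hCc e
  obtain ⟨E', x, y, hE'⟩ := distinguished_cocone_triangle₂ (c ≫ e₁)
  have hcomm : (c ≫ e₁) ≫ m⟦(1 : ℤ)⟧' = b ≫ Tr.mor₃ := by rw [assoc, he]
  obtain ⟨ε, -, hε⟩ : ∃ ε : E' ⟶ Tr.obj₂, x ≫ ε = m ≫ Tr.mor₁ ∧ y ≫ b = ε ≫ Tr.mor₂ :=
    complete_distinguished_triangle_morphism₂ _ _ hE' hTr m b hcomm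
  have hace : a ≫ c ≫ e₁ = 0 := by rw [← assoc, hac, zero_comp]
  obtain ⟨q, hq⟩ : ∃ q : K ⟶ E', a = q ≫ y := Triangle.coyoneda_exact₃ _ hE' a hace
  have hfq : (f - q ≫ ε) ≫ Tr.mor₂ = 0 := by
    rw [Preadditive.sub_comp, assoc, ← hε, ← assoc, ← hq, hab, sub_self]
  obtain ⟨g, hg⟩ := Triangle.coyoneda_exact₂ _ hTr (f - q ≫ ε) hfq
  rw [← sub_add_cancel f (q ≫ ε), hg]
  exact FactorsThroughClass.add hQ ((h₁ K hK g).comp _)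
    ⟨E', hQ.ext_mem hE' hF₁ hF₃, q, ε, rfl⟩

lemma isCocompletePreAisle_compactlyFactoring (hQ : IsExtSummandClosed Q)
    (hQc : Q ⊆ {X | IsCompactObject X}) (hQs : ∀ X ∈ Q, X⟦(1 : ℤ)⟧ ∈ Q) :
    IsCocompletePreAisle (compactlyFactoring Q) :=
  ⟨fun _ _ e => compactlyFactoring_of_retract e.hom e.inv e.inv_hom_id,
    mem_compactlyFactoring hQ.zero_mem, fun _ => shift_mem_compactlyFactoring hQs,
    fun _ hTr => ext_mem_compactlyFactoring hQ hQc hTr,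
    fun _ _ r s hsr => compactlyFactoring_of_retract r s hsr,
    fun _ hE => sigma_mem_compactlyFactoring hQ hE⟩

lemma shift_one_mem_genSet_Ici {W : T} {s : ℤ} {X : T} (hX : X ∈ genSet W {m | s ≤ m}) :
    X⟦(1 : ℤ)⟧ ∈ genSet W {m | s ≤ m} :=
  genSet_mono (by rintro _ ⟨m, hm, rfl⟩; change s ≤ m at hm; change s ≤ m + 1; omega)
    (shift_mem_genSet_image hX 1)

lemma mem_genSet_of_mem_aisleGen {W : T} (hW : IsCompactObject W) {s : ℤ} {X : T}
    (hX : X ∈ aisleGen W s) (hXc : IsCompactObject X) : X ∈ genSet W {m | s ≤ m} := by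
  have hQ := isExtSummandClosed_genSet W {m | s ≤ m}
  refine mem_of_mem_compactlyFactoring hQ ?_ hXc
  exact aisleGen_subset (isCocompletePreAisle_compactlyFactoring hQ
    (genSet_subset_isCompactObject hW _) fun _ => shift_one_mem_genSet_Ici)
    (fun m hm => mem_compactlyFactoring (shift_mem_genSet hm)) hX

end CompactApproximation

section Telescope

variable (A : ℕ → T) (a : ∀ n, A n ⟶ A (n + 1))

/-- The sequence `A`, reindexed by `ULift ℕ : Type v` so that its coproduct exists. -/
abbrev teleFam : ULift.{v} ℕ → T := fun n => A n.down

/-- The map `∐ Aₙ ⟶ ∐ Aₙ` whose difference with the identity has the homotopy colimit as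
its cone. -/
noncomputable def teleShift : ∐ teleFam A ⟶ ∐ teleFam A :=
  Sigma.desc fun n => a n.down ≫ Sigma.ι (teleFam A) ⟨n.down + 1⟩

variable {A}

lemma ι_teleShift (n : ℕ) :
    Sigma.ι (teleFam A) ⟨n⟩ ≫ teleShift A a = a n ≫ Sigma.ι (teleFam A) ⟨n + 1⟩ :=
  colimit.ι_desc _ _

lemma teleShift_comp_π_zero : teleShift A a ≫ Sigma.π (teleFam A) ⟨0⟩ = 0 := by
  ext ⟨n⟩
  rw [← assoc, ι_teleShift, assoc, Sigma.ι_π_of_ne _ (by simp), comp_zero, comp_zero]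

lemma teleShift_comp_π_succ (k : ℕ) :
    teleShift A a ≫ Sigma.π (teleFam A) ⟨k + 1⟩ = Sigma.π (teleFam A) ⟨k⟩ ≫ a k := by
  ext ⟨n⟩
  rw [← assoc, ι_teleShift, assoc]
  by_cases h : n = k
  · subst h; simp
  · rw [Sigma.ι_π_of_ne _ (by simpa using h), Sigma.ι_π_of_ne_assoc _ (by simpa using h),
      comp_zero, zero_comp]

lemma eq_zero_of_comp_teleShift {K : T} (hK : IsCompactObject K) (u : K ⟶ ∐ teleFam A)
    (hu : u ≫ teleShift A a = u) : u = 0 := by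
  have hπ : ∀ k, u ≫ Sigma.π (teleFam A) ⟨k⟩ = 0 := by
    intro k
    induction k with
    | zero => rw [← hu, assoc, teleShift_comp_π_zero, comp_zero]
    | succ k ih => rw [← hu, assoc, teleShift_comp_π_succ, ← assoc, ih, zero_comp]
  obtain ⟨S, hS⟩ := isCompactObject_iff.1 hK _ u
  rw [← hS, sigmaRestrict, Preadditive.comp_sum]
  exact Finset.sum_eq_zero fun j _ => by rw [← assoc, hπ j.down, zero_comp]

lemma sigmaComparison_comp_map_teleShift (F : T ⥤ T) :
    sigmaComparison F (teleFam A) ≫ F.map (teleShift A a) =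
      teleShift (fun n => F.obj (A n)) (fun n => F.map (a n)) ≫
        sigmaComparison F (teleFam A) := by
  ext ⟨n⟩
  rw [ι_comp_sigmaComparison_assoc, ← F.map_comp, ι_teleShift, F.map_comp,
    ← ι_comp_sigmaComparison]
  simp only [← assoc]
  congr 1
  exact (ι_teleShift (A := fun n => F.obj (A n)) (fun n => F.map (a n)) n).symm

variable {a} {E : T} {p : ∐ teleFam A ⟶ E} {d : E ⟶ (∐ teleFam A)⟦(1 : ℤ)⟧}

/-- `ψ ≫ d` is fixed by `(teleShift A a)⟦1⟧`, and no nonzero map out of a compact object is. -/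
lemma comp_tele_mor₃_eq_zero
    (hE : Triangle.mk (𝟙 (∐ teleFam A) - teleShift A a) p d ∈ distTriang T)
    {K : T} (hK : IsCompactObject K) (ψ : K ⟶ E) : ψ ≫ d = 0 := by
  let cmp := sigmaComparison (shiftFunctor T (1 : ℤ)) (teleFam A)
  have hfix : (ψ ≫ d) ≫ (teleShift A a)⟦(1 : ℤ)⟧' = ψ ≫ d := by
    have h : d ≫ (𝟙 _ - teleShift A a)⟦(1 : ℤ)⟧' = 0 := comp_distTriang_mor_zero₃₁ _ hE
    rw [Functor.map_sub, CategoryTheory.Functor.map_id, Preadditive.comp_sub, comp_id,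
      sub_eq_zero] at h
    rw [assoc, ← h]
  have hcmp : inv cmp ≫ teleShift _ (fun n => (a n)⟦(1 : ℤ)⟧') =
      (teleShift A a)⟦(1 : ℤ)⟧' ≫ inv cmp := by
    rw [IsIso.eq_comp_inv, assoc, ← sigmaComparison_comp_map_teleShift, IsIso.inv_hom_id_assoc]
  have h0 := eq_zero_of_comp_teleShift (fun n => (a n)⟦(1 : ℤ)⟧') hK ((ψ ≫ d) ≫ inv cmp)
    (by rw [assoc, hcmp, ← assoc, hfix])
  rwa [← cancel_mono (inv cmp), zero_comp]

lemma tele_ι_comp_mor₂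
    (hE : Triangle.mk (𝟙 (∐ teleFam A) - teleShift A a) p d ∈ distTriang T) (n : ℕ) :
    Sigma.ι (teleFam A) ⟨n⟩ ≫ p = a n ≫ Sigma.ι (teleFam A) ⟨n + 1⟩ ≫ p := by
  have h₀ : (𝟙 _ - teleShift A a) ≫ p = 0 := comp_distTriang_mor_zero₁₂ _ hE
  have h := Sigma.ι (teleFam A) ⟨n⟩ ≫= h₀
  rwa [comp_zero, Preadditive.comp_sub_assoc, comp_id, Preadditive.sub_comp,
    ι_teleShift, assoc, sub_eq_zero] at h

lemma tele_ι_comp_mor₂_of_le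
    (hE : Triangle.mk (𝟙 (∐ teleFam A) - teleShift A a) p d ∈ distTriang T) {m₁ m₂ : ℕ}
    (h : m₁ ≤ m₂) : ∃ c : A m₁ ⟶ A m₂,
      Sigma.ι (teleFam A) ⟨m₁⟩ ≫ p = c ≫ Sigma.ι (teleFam A) ⟨m₂⟩ ≫ p := by
  induction m₂, h using Nat.le_induction with
  | base => exact ⟨𝟙 _, (id_comp _).symm⟩
  | succ m _ ih =>
    obtain ⟨c, hc⟩ := ih
    exact ⟨c ≫ a m, by rw [hc, tele_ι_comp_mor₂ hE, assoc]⟩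

lemma tele_exists_stage
    (hE : Triangle.mk (𝟙 (∐ teleFam A) - teleShift A a) p d ∈ distTriang T)
    {K : T} (hK : IsCompactObject K) (ψ : K ⟶ E) :
    ∃ (m : ℕ) (χ : K ⟶ A m), ψ = χ ≫ Sigma.ι (teleFam A) ⟨m⟩ ≫ p := by
  classical
  obtain ⟨ψ', rfl⟩ : ∃ ψ' : K ⟶ ∐ teleFam A, ψ = ψ' ≫ p :=
    Triangle.coyoneda_exact₃ _ hE ψ (comp_tele_mor₃_eq_zero hE hK ψ)
  obtain ⟨S, hS⟩ := isCompactObject_iff.1 hK _ ψ'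
  rw [← hS, sigmaRestrict, Preadditive.comp_sum, Preadditive.sum_comp]
  refine Finset.sum_induction _ (fun φ => ∃ (m : ℕ) (χ : K ⟶ A m),
    φ = χ ≫ Sigma.ι (teleFam A) ⟨m⟩ ≫ p) ?_ ⟨0, 0, by rw [zero_comp]⟩
    fun j _ => ⟨j.down, ψ' ≫ Sigma.π _ j, by simp only [assoc]⟩
  rintro _ _ ⟨m₁, χ₁, rfl⟩ ⟨m₂, χ₂, rfl⟩
  obtain ⟨c₁, hc₁⟩ := tele_ι_comp_mor₂_of_le hE (le_max_left m₁ m₂)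
  obtain ⟨c₂, hc₂⟩ := tele_ι_comp_mor₂_of_le hE (le_max_right m₁ m₂)
  exact ⟨max m₁ m₂, χ₁ ≫ c₁ + χ₂ ≫ c₂, by rw [hc₁, hc₂, Preadditive.add_comp]; simp only [assoc]⟩

end Telescope

section CompactGenerator

/-- One step of the cellular tower: cone off every map `W⟦k⟧ ⟶ E` killed by `e`. -/
lemma exists_cellular_step (W : T) {E X : T} (e : E ⟶ X) :
    ∃ (E' : T) (τ : E ⟶ E') (e' : E' ⟶ X), e = τ ≫ e' ∧
      (∀ (k : ℤ) (ψ : W⟦k⟧ ⟶ E), ψ ≫ e = 0 → ψ ≫ τ = 0) ∧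
      ∀ Q : Set T, IsCocompletePreAisle Q → (∀ k : ℤ, W⟦k⟧ ∈ Q) → E ∈ Q → E' ∈ Q := by
  let cells : (Σ k : ULift.{v} ℤ, {ψ : W⟦k.down⟧ ⟶ E // ψ ≫ e = 0}) → T := fun c => W⟦c.1.down⟧
  let κ : ∐ cells ⟶ E := Sigma.desc fun c => c.2.1
  obtain ⟨E', τ, δ, hE'⟩ := distinguished_cocone_triangle κ
  have hκ : κ ≫ e = 0 := by
    ext c
    rw [colimit.ι_desc_assoc, comp_zero]
    exact c.2.2
  have hκτ : κ ≫ τ = 0 := comp_distTriang_mor_zero₁₂ _ hE'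
  obtain ⟨e', he'⟩ := Triangle.yoneda_exact₂ _ hE' e hκ
  refine ⟨E', τ, e', he', fun k ψ hψ => ?_, fun Q hQ hW hE => ?_⟩
  · have hι : Sigma.ι cells ⟨⟨k⟩, ⟨ψ, hψ⟩⟩ ≫ κ = ψ := colimit.ι_desc _ _
    rw [← hι, assoc, hκτ, comp_zero]
  · exact hQ.toIsExtSummandClosed.ext_mem (rot_of_distTriang _ hE') hE
      (hQ.shift_one_mem (hQ.sigma_mem fun c => hW _))

lemma exists_cellular_tower (W X : T) :
    ∃ (A : ℕ → T) (a : ∀ n, A n ⟶ A (n + 1)) (e : ∀ n, A n ⟶ X),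
      (∀ (k : ℤ) (x : W⟦k⟧ ⟶ X), ∃ y : W⟦k⟧ ⟶ A 0, y ≫ e 0 = x) ∧
      (∀ n, e n = a n ≫ e (n + 1)) ∧
      (∀ n (k : ℤ) (ψ : W⟦k⟧ ⟶ A n), ψ ≫ e n = 0 → ψ ≫ a n = 0) ∧
      ∀ Q : Set T, IsCocompletePreAisle Q → (∀ k : ℤ, W⟦k⟧ ∈ Q) → ∀ n, A n ∈ Q := by
  choose E' τ e' hfac hkill hmem using fun s : Σ E : T, E ⟶ X => exists_cellular_step W s.2
  let cells : (Σ k : ULift.{v} ℤ, W⟦k.down⟧ ⟶ X) → T := fun c => W⟦c.1.down⟧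
  let tower : ℕ → Σ E : T, E ⟶ X := fun n =>
    Nat.rec ⟨∐ cells, Sigma.desc fun c => c.2⟩ (fun _ s => ⟨E' s, e' s⟩) n
  refine ⟨fun n => (tower n).1, fun n => τ (tower n), fun n => (tower n).2,
    fun k x => ⟨Sigma.ι cells ⟨⟨k⟩, x⟩, colimit.ι_desc _ _⟩, fun n => hfac (tower n),
    fun n => hkill (tower n), fun Q hQ hW n => ?_⟩
  induction n with
  | zero => exact hQ.sigma_mem fun c => hW _
  | succ n ih => exact hmem (tower n) Q hQ hW ih

lemma isIso_of_isGenerator {W : T} (hW : IsGenerator W) {E X : T} (φ : E ⟶ X)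
    (hsurj : ∀ (k : ℤ) (x : W⟦k⟧ ⟶ X), ∃ y : W⟦k⟧ ⟶ E, y ≫ φ = x)
    (hinj : ∀ (k : ℤ) (y : W⟦k⟧ ⟶ E), y ≫ φ = 0 → y = 0) : IsIso φ := by
  have hinj₁ : ∀ (k : ℤ) (y : W⟦k⟧ ⟶ E⟦(1 : ℤ)⟧), y ≫ φ⟦(1 : ℤ)⟧' = 0 → y = 0 := by
    intro k y hy
    let e : W⟦k - 1⟧⟦(1 : ℤ)⟧ ≅ W⟦k⟧ := ((shiftFunctorAdd' T (k - 1) 1 k (by omega)).app W).symm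
    let g := (shiftFunctor T (1 : ℤ)).preimage (e.hom ≫ y)
    have hg : g ≫ φ = 0 := (shiftFunctor T (1 : ℤ)).map_injective (by
      rw [Functor.map_comp, Functor.map_preimage, assoc, hy, comp_zero, Functor.map_zero])
    rw [← cancel_epi e.hom, comp_zero, ← Functor.map_preimage (shiftFunctor T (1 : ℤ))
      (e.hom ≫ y)]
    change g⟦(1 : ℤ)⟧' = 0
    rw [hinj _ g hg, Functor.map_zero]
  obtain ⟨D, π, δ, hD⟩ := distinguished_cocone_triangle φ
  refine (Triangle.isZero₃_iff_isIso₁ _ hD).1 (hW D fun k c => ?_)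
  have hφπ : φ ≫ π = 0 := comp_distTriang_mor_zero₁₂ _ hD
  have hδφ : δ ≫ φ⟦(1 : ℤ)⟧' = 0 := comp_distTriang_mor_zero₃₁ _ hD
  have hcδ : c ≫ δ = 0 := hinj₁ k _ (by rw [assoc, hδφ, comp_zero])
  obtain ⟨ξ, rfl⟩ : ∃ ξ : W⟦k⟧ ⟶ X, c = ξ ≫ π := Triangle.coyoneda_exact₃ _ hD c hcδ
  obtain ⟨y, rfl⟩ := hsurj k ξ
  rw [assoc, hφπ, comp_zero]

/-- The comparison map from the homotopy colimit of the cellular tower to `X` is bijective on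
maps out of shifts of `W`, so its cone vanishes. -/
lemma IsCocompletePreAisle.mem_of_isGenerator {W : T} (hWc : IsCompactObject W)
    (hWg : IsGenerator W) {Q : Set T} (hQ : IsCocompletePreAisle Q) (hW : ∀ k : ℤ, W⟦k⟧ ∈ Q)
    (X : T) : X ∈ Q := by
  obtain ⟨A, a, e, he₀, hea, hkill, hA⟩ := exists_cellular_tower W X
  obtain ⟨E, p, d, hE⟩ := distinguished_cocone_triangle (𝟙 (∐ teleFam A) - teleShift A a)
  let c : ∐ teleFam A ⟶ X := Sigma.desc fun n => e n.down
  have hιc : ∀ n, Sigma.ι (teleFam A) ⟨n⟩ ≫ c = e n := fun n => colimit.ι_desc _ _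
  have hc : (𝟙 _ - teleShift A a) ≫ c = 0 := by
    ext ⟨n⟩
    rw [comp_zero, ← assoc, Preadditive.comp_sub, comp_id, ι_teleShift, Preadditive.sub_comp,
      assoc, hιc, hιc, ← hea, sub_self]
  obtain ⟨φ, hφ⟩ : ∃ φ : E ⟶ X, c = p ≫ φ := Triangle.yoneda_exact₂ _ hE c hc
  have hιφ : ∀ n, Sigma.ι (teleFam A) ⟨n⟩ ≫ p ≫ φ = e n := fun n => by rw [← hφ, hιc]
  have hsurj : ∀ (k : ℤ) (x : W⟦k⟧ ⟶ X), ∃ y : W⟦k⟧ ⟶ E, y ≫ φ = x := fun k x => by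
    obtain ⟨y, rfl⟩ := he₀ k x
    exact ⟨y ≫ Sigma.ι (teleFam A) ⟨0⟩ ≫ p, by rw [assoc, assoc, hιφ]⟩
  have hinj : ∀ (k : ℤ) (ψ : W⟦k⟧ ⟶ E), ψ ≫ φ = 0 → ψ = 0 := fun k ψ hψ => by
    obtain ⟨m, χ, rfl⟩ := tele_exists_stage hE (isCompactObject_shift hWc k) ψ
    rw [assoc, assoc, hιφ] at hψ
    rw [tele_ι_comp_mor₂ hE, ← assoc, hkill m k χ hψ, zero_comp]
  have := isIso_of_isGenerator hWg φ hsurj hinj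
  have hsigma : ∐ teleFam A ∈ Q := hQ.sigma_mem fun n => hA Q hQ hW n.down
  exact hQ.toIsExtSummandClosed.of_iso (asIso φ) (hQ.toIsExtSummandClosed.ext_mem
    (rot_of_distTriang _ hE) hsigma (hQ.shift_one_mem hsigma))

lemma mem_genSet_univ_of_isGenerator {W X : T} (hWc : IsCompactObject W) (hWg : IsGenerator W)
    (hXc : IsCompactObject X) : X ∈ genSet W Set.univ := by
  have hQ := isExtSummandClosed_genSet W Set.univ
  have hQs : ∀ Y ∈ genSet W Set.univ, Y⟦(1 : ℤ)⟧ ∈ genSet W Set.univ := fun _ hY =>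
    genSet_mono (Set.subset_univ _) (shift_mem_genSet_image hY 1)
  refine mem_of_mem_compactlyFactoring hQ ?_ hXc
  exact (isCocompletePreAisle_compactlyFactoring hQ (genSet_subset_isCompactObject hWc _)
    hQs).mem_of_isGenerator hWc hWg (fun _ => mem_compactlyFactoring (shift_mem_genSet trivial)) X

lemma exists_mem_genSet_Icc_of_isGenerator {W X : T} (hWc : IsCompactObject W)
    (hWg : IsGenerator W) (hXc : IsCompactObject X) :
    ∃ c d : ℤ, X ∈ genSet W (Set.Icc c d) := by
  obtain ⟨c, d, hX⟩ := exists_mem_genSet_inter_Icc (mem_genSet_univ_of_isGenerator hWc hWg hXc)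
  exact ⟨c, d, genSet_mono Set.inter_subset_right hX⟩

end CompactGenerator

/-- with `G` a classical generator of `T^c` and a t-structure in the
preferred class, the metrics `{L_i}` and `{M_i}` are equivalent and `{M_i}` is finer
than `{N_i}`. -/
theorem statement15 (t : TStruct T)
    (H : T) (hHc : IsCompactObject H) (hHgen : IsGenerator H)
    (hvanish : ∃ n : ℤ, ∀ i : ℤ, n ≤ i → ∀ f : H ⟶ H⟦i⟧, f = 0)
    (hpref : InPreferredClass t)
    (G : T) (hGc : IsCompactObject G)
    (hGgen : {X : T | IsCompactObject X} ⊆ genSet G Set.univ) :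
    (∀ i : ℕ, ∃ j : ℕ, Lmet G j ⊆ Mmet t i) ∧
    (∀ i : ℕ, ∃ j : ℕ, Mmet t j ⊆ Lmet G i) ∧
    (∀ i : ℕ, ∃ j : ℕ, Mmet t j ⊆ Nmet G i) := by
  obtain ⟨G₀, hG₀c, hG₀gen, A, -, hA_le, hle_A⟩ := hpref
  obtain ⟨n₀, hn₀⟩ := hvanish
  obtain ⟨cG, dG, hGG₀⟩ := exists_mem_genSet_Icc_of_isGenerator hG₀c hG₀gen hGc
  obtain ⟨c₀, d₀, hG₀G⟩ := exists_mem_genSet_inter_Icc (hGgen hG₀c)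
  obtain ⟨cH, dH, hGH⟩ := exists_mem_genSet_Icc_of_isGenerator hHc hHgen hGc
  have hGvanish := hom_shift_eq_zero_of_mem_genSet_Icc hn₀ hGH
  have hL : ∀ j : ℕ, Lmet G j ⊆ aisleGen G₀ (cG + j) := fun j =>
    (genSet_subset_aisleGen fun _ hm => hm).trans
      (aisleGen_subset_aisleGen_of_mem_genSet (genSet_mono (fun _ hm => hm.1) hGG₀) j)
  have hM : ∀ j : ℕ, Mmet t j ⊆ genSet G {m | c₀ - A + j ≤ m} := fun j X ⟨hXc, hX⟩ =>
    genSet_mono (fun m (hm : c₀ + (-A - -(j : ℤ)) ≤ m) => show c₀ - A + j ≤ m by omega)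
      (mem_genSet_of_mem_aisleGen hGc (aisleGen_subset_aisleGen_of_mem_genSet
        (genSet_mono (fun _ hm => hm.2.1) hG₀G) _ (t.le_subset_aisleGen hle_A _ hX)) hXc)
  refine ⟨fun i => ⟨(A + i - cG).toNat, fun X hX => ⟨genSet_subset_isCompactObject hGc _ hX,
      t.aisleGen_subset_le hA_le _ (aisleGen_anti ?_ (hL _ hX))⟩⟩,
    fun i => ⟨(i + A - c₀).toNat, (hM _).trans (genSet_mono ?_)⟩,
    fun i => ⟨(i + (n₀ + (dH - cH)) + A - c₀).toNat, fun X hX => ⟨hX.1, fun P hP =>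
      genSet_Iic_hom_genSet_Ici_eq_zero hGvanish ?_ P hP X (hM _ hX)⟩⟩⟩
  · omega
  · intro m (hm : _ ≤ m)
    change (i : ℤ) ≤ m
    omega
  · omega

end Stmt15
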